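/- arXiv:2408.12541 — 4 statements merged into one kernel-verified Lean document; each statement's English description precedes it below -/
import Mathlib

section
/- Let $\rho_1,\dots,\rho_K \ge 0$ with $\sum_k \rho_k = 1$, and for each $k$ let $\delta_k = p_{1k} - p_{0k}$ and $H_k = \pi_0(1/2 - p_{1k}) + \pi_1(p_{0k} - 1/2)$ where $\pi_0 = \pi_1 = 1/2$. Then $-\sum_{1 \le i < j \le K} \rho_i \rho_j (\delta_i - \delta_j)(H_i - H_j) = \frac{1}{2}\sum_{1 \le i < j \le K} \rho_i \rho_j (\delta_i - \delta_j)^2 \ge 0$. -/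
open Finset

theorem balanced_H_eq_neg_half_mul {p1 p0 δ H : ℝ} (hδ : δ = p1 - p0)
    (hH : H = (1/2) * (1/2 - p1) + (1/2) * (p0 - 1/2)) : H = -(1/2) * δ := by
  subst hδ hH
  ring

section PairSums

variable {ι : Type*} [LinearOrder ι] (s : Finset ι) (ρ δ : ι → ℝ)

theorem sum_pairs_mul_sub_of_eq_const_mul (H : ι → ℝ) (c : ℝ) (hH : ∀ k, H k = c * δ k) :
    ∑ i ∈ s, ∑ j ∈ s, (if i < j then ρ i * ρ j * (δ i - δ j) * (H i - H j) else 0)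
      = c * ∑ i ∈ s, ∑ j ∈ s, (if i < j then ρ i * ρ j * (δ i - δ j) ^ 2 else 0) := by
  simp_rw [mul_sum, mul_ite, mul_zero, hH]
  refine sum_congr rfl fun i _ => sum_congr rfl fun j _ => ?_
  congr 1
  ring

theorem sum_pairs_mul_sq_nonneg (hρ : ∀ k ∈ s, 0 ≤ ρ k) :
    0 ≤ ∑ i ∈ s, ∑ j ∈ s, (if i < j then ρ i * ρ j * (δ i - δ j) ^ 2 else 0) :=
  sum_nonneg fun i hi => sum_nonneg fun j hj => by
    split_ifs
    · exact mul_nonneg (mul_nonneg (hρ i hi) (hρ j hj)) (sq_nonneg _)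
    · exact le_rfl

end PairSums

theorem sato_conservative_balanced_general (K : ℕ) (ρ p1 p0 : ℕ → ℝ)
    (hρ : ∀ k, 0 ≤ ρ k)
    (δ H : ℕ → ℝ)
    (hδ : ∀ k, δ k = p1 k - p0 k)
    (hH : ∀ k, H k = (1/2) * (1/2 - p1 k) + (1/2) * (p0 k - 1/2)) :
    (-∑ i ∈ Finset.range K, ∑ j ∈ Finset.range K,
        (if i < j then ρ i * ρ j * (δ i - δ j) * (H i - H j) else 0)
      = (1/2) * ∑ i ∈ Finset.range K, ∑ j ∈ Finset.range K,
          (if i < j then ρ i * ρ j * (δ i - δ j) ^ 2 else 0))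
    ∧ 0 ≤ (1/2) * ∑ i ∈ Finset.range K, ∑ j ∈ Finset.range K,
          (if i < j then ρ i * ρ j * (δ i - δ j) ^ 2 else 0) := by
  have hHδ (k : ℕ) : H k = -(1/2) * δ k := balanced_H_eq_neg_half_mul (hδ k) (hH k)
  refine ⟨?_, mul_nonneg (by norm_num) (sum_pairs_mul_sq_nonneg _ ρ δ fun k _ => hρ k)⟩
  rw [sum_pairs_mul_sub_of_eq_const_mul _ ρ δ H _ hHδ]
  ring

theorem sato_conservative_balanced (K : ℕ) (ρ p1 p0 : ℕ → ℝ)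
    (hρ : ∀ k, 0 ≤ ρ k) (hsum : ∑ k ∈ Finset.range K, ρ k = 1)
    (hp1 : ∀ k, p1 k ∈ Set.Icc (0 : ℝ) 1) (hp0 : ∀ k, p0 k ∈ Set.Icc (0 : ℝ) 1)
    (δ H : ℕ → ℝ)
    (hδ : ∀ k, δ k = p1 k - p0 k)
    (hH : ∀ k, H k = (1/2) * (1/2 - p1 k) + (1/2) * (p0 k - 1/2)) :
    (-∑ i ∈ Finset.range K, ∑ j ∈ Finset.range K,
        (if i < j then ρ i * ρ j * (δ i - δ j) * (H i - H j) else 0)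
      = (1/2) * ∑ i ∈ Finset.range K, ∑ j ∈ Finset.range K,
          (if i < j then ρ i * ρ j * (δ i - δ j) ^ 2 else 0))
    ∧ 0 ≤ (1/2) * ∑ i ∈ Finset.range K, ∑ j ∈ Finset.range K,
          (if i < j then ρ i * ρ j * (δ i - δ j) ^ 2 else 0) :=
  sato_conservative_balanced_general K ρ p1 p0 hρ δ H hδ hH
end

section
/- Let $n \ge 1$, $\pi_1 \in [0,1]$, $\pi_0 = 1-\pi_1$, and $X \sim \mathrm{Binomial}(n, \pi_1)$. Define $W = X(n-X)/n$. Then $\mathrm{var}(W) = \pi_1\pi_0 \frac{n-1}{n}\{n - 1 - (4n-6)\pi_1\pi_0\}$. -/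
/-!
Every polynomial in `X` is a combination of the falling factorials `X(X-1)⋯(X-r+1)`,
whose binomial expectations are `n(n-1)⋯(n-r+1) pʳ`. Writing `X(n-X)` and `X²(n-X)²` in
that basis gives `E[X(n-X)] = n(n-1)pq` and `E[X²(n-X)²] = n(n-1)pq{n-1+(n-2)(n-3)pq}`,
and the variance of `W = X(n-X)/n` follows.
-/

open Finset Polynomial

theorem Nat.choose_add_mul_descFactorial (n r j : ℕ) :
    n.choose (r + j) * (r + j).descFactorial r = n.descFactorial r * (n - r).choose j := by
  rw [Nat.descFactorial_eq_factorial_mul_choose, Nat.descFactorial_eq_factorial_mul_choose,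
    mul_left_comm, Nat.choose_mul (Nat.le_add_right r j), Nat.add_sub_cancel_left]
  ring

theorem sum_range_choose_mul_descFactorial {R : Type*} [CommSemiring R] (n r : ℕ) (p q : R) :
    ∑ k ∈ range (n + 1), (n.choose k : R) * p ^ k * q ^ (n - k) * (k.descFactorial r : R)
      = n.descFactorial r * p ^ r * (p + q) ^ (n - r) := by
  have vanish : ∀ k < r, (n.choose k : R) * p ^ k * q ^ (n - k) * (k.descFactorial r : R) = 0 :=
    fun k hk => by rw [Nat.descFactorial_of_lt hk, Nat.cast_zero, mul_zero]
  rcases lt_or_ge n r with hnr | hrn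
  · rw [Nat.descFactorial_of_lt hnr, Nat.cast_zero, zero_mul, zero_mul]
    exact sum_eq_zero fun k hk => vanish k (by rw [mem_range] at hk; omega)
  obtain ⟨m, rfl⟩ := Nat.exists_eq_add_of_le hrn
  rw [add_assoc, sum_range_add, sum_eq_zero fun k hk => vanish k (mem_range.1 hk), zero_add,
    Nat.add_sub_cancel_left, add_pow, mul_sum]
  refine sum_congr rfl fun j _ => ?_
  rw [Nat.add_sub_add_left, pow_add]
  calc _ = ((r + m).choose (r + j) * (r + j).descFactorial r : ℕ)
          * (p ^ r * p ^ j * q ^ (m - j)) := by push_cast; ring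
    _ = _ := by rw [Nat.choose_add_mul_descFactorial, Nat.add_sub_cancel_left]; push_cast; ring

section BinomialExpectation

variable {R : Type*} [CommRing R]

def binomialExpectation (n : ℕ) (p : R) (f : R → R) : R :=
  ∑ k ∈ range (n + 1), (n.choose k : R) * p ^ k * (1 - p) ^ (n - k) * f k

variable (n : ℕ) (p : R)

theorem binomialExpectation_add (f g : R → R) :
    binomialExpectation n p (fun x => f x + g x)
      = binomialExpectation n p f + binomialExpectation n p g := by
  simp only [binomialExpectation, mul_add, sum_add_distrib]

theorem binomialExpectation_sub (f g : R → R) :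
    binomialExpectation n p (fun x => f x - g x)
      = binomialExpectation n p f - binomialExpectation n p g := by
  simp only [binomialExpectation, mul_sub, sum_sub_distrib]

theorem binomialExpectation_const_mul (c : R) (f : R → R) :
    binomialExpectation n p (fun x => c * f x) = c * binomialExpectation n p f := by
  simp only [binomialExpectation, mul_sum]
  exact sum_congr rfl fun _ _ => by ring

theorem binomialExpectation_div_const {K : Type*} [Field K] (p c : K) (f : K → K) :
    binomialExpectation n p (fun x => f x / c) = binomialExpectation n p f / c := by
  simp only [binomialExpectation, sum_div, mul_div_assoc]

theorem binomialExpectation_descPochhammer (r : ℕ) :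
    binomialExpectation n p (fun x => (descPochhammer R r).eval x)
      = (descPochhammer R r).eval (n : R) * p ^ r := by
  simp only [binomialExpectation, descPochhammer_eval_eq_descFactorial,
    sum_range_choose_mul_descFactorial, add_sub_cancel, one_pow, mul_one]

theorem binomialExpectation_mul_sub :
    binomialExpectation n p (fun x => x * (n - x)) = n * (n - 1) * p * (1 - p) := by
  have basis : (fun x : R => x * (n - x)) = fun x =>
      ((n : R) - 1) * (descPochhammer R 1).eval x - (descPochhammer R 2).eval x := by
    funext x
    simp only [descPochhammer_succ_eval, descPochhammer_one, eval_X, Nat.cast_one]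
    ring
  rw [basis, binomialExpectation_sub, binomialExpectation_const_mul,
    binomialExpectation_descPochhammer, binomialExpectation_descPochhammer]
  simp only [descPochhammer_succ_eval, descPochhammer_one, eval_X, pow_one, Nat.cast_one]
  ring

theorem binomialExpectation_mul_sub_sq :
    binomialExpectation n p (fun x => (x * (n - x)) ^ 2)
      = n * (n - 1) * p * (1 - p) * (n - 1 + (n - 2) * (n - 3) * p * (1 - p)) := by
  have basis : (fun x : R => (x * (n - x)) ^ 2) = fun x =>
      ((n : R) - 1) ^ 2 * (descPochhammer R 1).eval x
        + ((n : R) ^ 2 - 6 * n + 7) * (descPochhammer R 2).eval x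
        + (6 - 2 * (n : R)) * (descPochhammer R 3).eval x
        + (descPochhammer R 4).eval x := by
    funext x
    simp only [descPochhammer_succ_eval, descPochhammer_one, eval_X, Nat.cast_one,
      Nat.cast_ofNat]
    ring
  rw [basis]
  simp only [binomialExpectation_add, binomialExpectation_const_mul,
    binomialExpectation_descPochhammer]
  simp only [descPochhammer_succ_eval, descPochhammer_one, eval_X, pow_one, Nat.cast_one,
      Nat.cast_ofNat]
  ring

end BinomialExpectation

theorem mh_weight_variance_general (n : ℕ) (hn : 1 ≤ n) (π₁ π₀ : ℝ)
    (hπ₀ : π₀ = 1 - π₁) :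
    (∑ k ∈ Finset.range (n + 1),
        (n.choose k : ℝ) * π₁ ^ k * (1 - π₁) ^ (n - k)
          * ((k : ℝ) * ((n : ℝ) - (k : ℝ)) / (n : ℝ)) ^ 2)
    - (∑ k ∈ Finset.range (n + 1),
        (n.choose k : ℝ) * π₁ ^ k * (1 - π₁) ^ (n - k)
          * ((k : ℝ) * ((n : ℝ) - (k : ℝ)) / (n : ℝ))) ^ 2
    = π₁ * π₀ * (((n : ℝ) - 1) / (n : ℝ))
        * ((n : ℝ) - 1 - (4 * (n : ℝ) - 6) * π₁ * π₀) := by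
  have hn0 : (n : ℝ) ≠ 0 := Nat.cast_ne_zero.2 (by omega)
  change binomialExpectation n π₁ (fun x => (x * (n - x) / n) ^ 2)
      - binomialExpectation n π₁ (fun x => x * (n - x) / n) ^ 2 = _
  simp only [div_pow, binomialExpectation_div_const, binomialExpectation_mul_sub,
    binomialExpectation_mul_sub_sq, hπ₀]
  field_simp
  ring

theorem mh_weight_variance (n : ℕ) (hn : 1 ≤ n) (π₁ π₀ : ℝ)
    (h0 : 0 ≤ π₁) (h1 : π₁ ≤ 1) (hπ₀ : π₀ = 1 - π₁) :
    (∑ k ∈ Finset.range (n + 1),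
        (n.choose k : ℝ) * π₁ ^ k * (1 - π₁) ^ (n - k)
          * ((k : ℝ) * ((n : ℝ) - (k : ℝ)) / (n : ℝ)) ^ 2)
    - (∑ k ∈ Finset.range (n + 1),
        (n.choose k : ℝ) * π₁ ^ k * (1 - π₁) ^ (n - k)
          * ((k : ℝ) * ((n : ℝ) - (k : ℝ)) / (n : ℝ))) ^ 2
    = π₁ * π₀ * (((n : ℝ) - 1) / (n : ℝ))
        * ((n : ℝ) - 1 - (4 * (n : ℝ) - 6) * π₁ * π₀) :=
  mh_weight_variance_general n hn π₁ π₀ hπ₀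
end

section
/- Let $n_{.1k}, n_{.0k} > 0$, $n_{..k} = n_{.1k}+n_{.0k}$, and let $n_{11k}, n_{01k}, n_{10k}, n_{00k} \ge 0$ be integers with $n_{11k}+n_{01k} = n_{.1k}$ and $n_{10k}+n_{00k} = n_{.0k}$. Define $\lambda_k = \frac{n_{.0k}n_{11k}/n_{.1k} - n_{.1k}n_{10k}/n_{.0k}}{n_{.0k} - n_{.1k}}$ (assuming $n_{.0k} \ne n_{.1k}$). Then $\lambda_k (n_{.0k}^2 n_{01k} - n_{.1k}^2 n_{00k}) + (1-\lambda_k)(n_{.1k}^2 n_{10k} - n_{.0k}^2 n_{11k}) = 0$. -/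
/-!
By the marginal constraints the two components differ by a term free of the cell counts,
`Â - B̂ = N₀ N₁ (N₀ - N₁)`, so `λ Â + (1 - λ) B̂ = λ N₀ N₁ (N₀ - N₁) + B̂`; and `λ` is exactly
the weight for which `λ N₀ N₁ (N₀ - N₁) = N₀² n₁₁ - N₁² n₁₀ = -B̂`.
-/

section
variable {K : Type*} [Field K]

theorem sato_components_sub_eq {n11 n01 n10 n00 N1 N0 : K}
    (hN1 : N1 = n11 + n01) (hN0 : N0 = n10 + n00) :
    (N0 ^ 2 * n01 - N1 ^ 2 * n00) - (N1 ^ 2 * n10 - N0 ^ 2 * n11) = N0 * N1 * (N0 - N1) := by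
  subst hN1 hN0
  ring

theorem gr_weight_mul_eq {N1 N0 : K} (n11 n10 : K) (hN1 : N1 ≠ 0) (hN0 : N0 ≠ 0)
    (hne : N0 ≠ N1) :
    (N0 * n11 / N1 - N1 * n10 / N0) / (N0 - N1) * (N0 * N1 * (N0 - N1))
      = N0 ^ 2 * n11 - N1 ^ 2 * n10 := by
  have hsub : N0 - N1 ≠ 0 := sub_ne_zero.mpr hne
  field_simp

end

theorem gr_lambda_cancellation
    (n11 n01 n10 n00 : ℕ) (N1 N0 : ℝ)
    (hN1 : N1 = (n11 : ℝ) + (n01 : ℝ)) (hN0 : N0 = (n10 : ℝ) + (n00 : ℝ))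
    (hN1pos : 0 < N1) (hN0pos : 0 < N0) (hne : N0 ≠ N1)
    (lam : ℝ)
    (hlam : lam = (N0 * (n11 : ℝ) / N1 - N1 * (n10 : ℝ) / N0) / (N0 - N1)) :
    lam * (N0 ^ 2 * (n01 : ℝ) - N1 ^ 2 * (n00 : ℝ))
      + (1 - lam) * (N1 ^ 2 * (n10 : ℝ) - N0 ^ 2 * (n11 : ℝ)) = 0 := by
  have hdiff := sato_components_sub_eq hN1 hN0
  have hweight := gr_weight_mul_eq (n11 : ℝ) n10 hN1pos.ne' hN0pos.ne' hne
  rw [← hlam] at hweight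
  calc lam * (N0 ^ 2 * (n01 : ℝ) - N1 ^ 2 * (n00 : ℝ))
        + (1 - lam) * (N1 ^ 2 * (n10 : ℝ) - N0 ^ 2 * (n11 : ℝ))
      = lam * (N0 * N1 * (N0 - N1)) + (N1 ^ 2 * (n10 : ℝ) - N0 ^ 2 * (n11 : ℝ)) := by
        rw [← hdiff]; ring
    _ = 0 := by rw [hweight]; ring
end

section
/- Let $n_{.1k}, n_{.0k} > 0$, $n_{..k} = n_{.1k}+n_{.0k}$, $n_{11k}+n_{01k}=n_{.1k}$, $n_{10k}+n_{00k}=n_{.0k}$ all nonnegative integers, $n_{.0k} \ne n_{.1k}$, and $\lambda_k = \frac{n_{.0k}n_{11k}/n_{.1k} - n_{.1k}n_{10k}/n_{.0k}}{n_{.0k}-n_{.1k}}$. Then $\lambda_k(n_{.0k}n_{10k}n_{01k} + n_{.1k}n_{11k}n_{00k}) + (1-\lambda_k)(n_{.0k}n_{11k}n_{00k} + n_{.1k}n_{10k}n_{01k}) = \frac{n_{.0k}^3 n_{11k}n_{01k} + n_{.1k}^3 n_{10k}n_{00k}}{n_{.1k}n_{.0k}}$. -/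
/-! Writing the combination as `Q + λ (P - Q)` with `P - Q = (N1 - N0)(n11 n00 - n10 n01)`, the
denominator `N0 - N1` of `λ` cancels, leaving an identity in which only `N1`, `N0` are inverted;
it follows from the margins `N1 = n11 + n01`, `N0 = n10 + n00`. -/

section
variable {K : Type*} [Field K]

theorem sato_components_sub (n11 n01 n10 n00 N1 N0 : K) :
    (N0 * n10 * n01 + N1 * n11 * n00) - (N0 * n11 * n00 + N1 * n10 * n01)
      = (N1 - N0) * (n11 * n00 - n10 * n01) := by
  ring

theorem lambda_mul_sato_components_sub {n11 n01 n10 n00 N1 N0 lam : K} (hne : N0 ≠ N1)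
    (hlam : lam = (N0 * n11 / N1 - N1 * n10 / N0) / (N0 - N1)) :
    lam * ((N0 * n10 * n01 + N1 * n11 * n00) - (N0 * n11 * n00 + N1 * n10 * n01))
      = -((N0 * n11 / N1 - N1 * n10 / N0) * (n11 * n00 - n10 * n01)) := by
  have hd : N0 - N1 ≠ 0 := sub_ne_zero.mpr hne
  rw [sato_components_sub, hlam]
  field_simp
  ring

theorem greenland_robins_numerator {n11 n01 n10 n00 N1 N0 : K}
    (hN1 : N1 = n11 + n01) (hN0 : N0 = n10 + n00) (hN1ne : N1 ≠ 0) (hN0ne : N0 ≠ 0) :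
    (N0 * n11 * n00 + N1 * n10 * n01) - (N0 * n11 / N1 - N1 * n10 / N0) * (n11 * n00 - n10 * n01)
      = (N0 ^ 3 * n11 * n01 + N1 ^ 3 * n10 * n00) / (N1 * N0) := by
  field_simp
  subst hN1 hN0
  ring

end

theorem gr_lambda_combination
    (n11 n01 n10 n00 : ℕ) (N1 N0 : ℝ)
    (hN1 : N1 = (n11 : ℝ) + (n01 : ℝ)) (hN0 : N0 = (n10 : ℝ) + (n00 : ℝ))
    (hN1pos : 0 < N1) (hN0pos : 0 < N0) (hne : N0 ≠ N1)
    (lam : ℝ)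
    (hlam : lam = (N0 * (n11 : ℝ) / N1 - N1 * (n10 : ℝ) / N0) / (N0 - N1)) :
    lam * (N0 * (n10 : ℝ) * (n01 : ℝ) + N1 * (n11 : ℝ) * (n00 : ℝ))
      + (1 - lam) * (N0 * (n11 : ℝ) * (n00 : ℝ) + N1 * (n10 : ℝ) * (n01 : ℝ))
    = (N0 ^ 3 * (n11 : ℝ) * (n01 : ℝ) + N1 ^ 3 * (n10 : ℝ) * (n00 : ℝ)) / (N1 * N0) := by
  calc _ = (N0 * n11 * n00 + N1 * n10 * n01)
        + lam * ((N0 * n10 * n01 + N1 * n11 * n00) - (N0 * n11 * n00 + N1 * n10 * n01)) := by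
          ring
    _ = _ := by
      rw [lambda_mul_sato_components_sub hne hlam, ← sub_eq_add_neg,
        greenland_robins_numerator hN1 hN0 hN1pos.ne' hN0pos.ne']
end
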